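/- Let p be prime, k ≥ 3, and let S ⊆ ℤ/pℤ be k-separable with 0 ∈ S, |S| ≥ 2, and κ_k(S) ≤ |S| + m. Then every k-atom A of S satisfies |A| ≤ 2m + k + 2. -/

import Mathlib

open Finset Pointwise

/-- The arithmetic progression `{a, a+d, ..., a+(L-1)d}` in `ZMod p`. -/
def apSet {p : ℕ} (a d : ZMod p) (L : ℕ) : Finset (ZMod p) :=
  (Finset.range L).image (fun i : ℕ => a + (i : ZMod p) * d)

/-- `X` is contained in an arithmetic progression of length `L` (nonzero difference). -/
def ContainedInAP {p : ℕ} (X : Finset (ZMod p)) (L : ℕ) : Prop :=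
  ∃ a d : ZMod p, d ≠ 0 ∧ X ⊆ apSet a d L

/-- `ℓ(X)`: the length of a shortest arithmetic progression containing `X`. -/
noncomputable def APlen {p : ℕ} (X : Finset (ZMod p)) : ℕ :=
  sInf {L : ℕ | ContainedInAP X L}

/-- `S` is `k`-separable. -/
def Separable (p k : ℕ) (S : Finset (ZMod p)) : Prop :=
  ∃ X : Finset (ZMod p), k ≤ X.card ∧ (X + S).card ≤ p - k

/-- The `k`-th isoperimetric number `κ_k(S)`. -/
noncomputable def kappa (p k : ℕ) (S : Finset (ZMod p)) : ℤ :=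
  sInf {n : ℤ | ∃ X : Finset (ZMod p),
    k ≤ X.card ∧ (X + S).card ≤ p - k ∧ n = ((X + S).card : ℤ) - X.card}

/-- `X` is a `k`-fragment of `S`. -/
noncomputable def IsFragment (p k : ℕ) (S X : Finset (ZMod p)) : Prop :=
  k ≤ X.card ∧ (X + S).card ≤ p - k ∧ ((X + S).card : ℤ) - X.card = kappa p k S

/-- `X` is a `k`-atom of `S`: a `k`-fragment of minimal cardinality. -/
noncomputable def IsKAtom (p k : ℕ) (S X : Finset (ZMod p)) : Prop :=
  IsFragment p k S X ∧ ∀ Y : Finset (ZMod p), IsFragment p k S Y → X.card ≤ Y.card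


/-!
Translates of a `j`-atom `A` of `T` meet in fewer than `j` points: otherwise submodularity of
`X ↦ #(X + T)` makes `A ∩ (c +ᵥ A)` a smaller fragment, unless `A ∪ (c +ᵥ A)` is too large to
be admissible, which the duality `X ↦ -(X + T)ᶜ` between fragments rules out. Counting
translates, `#(D + A) ≥ #D #A - (j - 1) (#D choose 2)`.

The `k`-atom `A` is `2`-separable, witnessed by `S`, with `κ₂(A) - #A ≤ m`. For a `2`-atom `B`
of `A` the counting bound gives `2 #A - (k - 1) ≤ #(B + A) = #B + κ₂(A)`, and applied to a
`2`-atom `C` of `B` it bounds `#B ≤ κ₂(A) - #A + 3`.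
-/
lemma Finset.card_inter_add_add_card_union_add_le {α : Type*} [DecidableEq α] [Add α]
    (X Y T : Finset α) : #((X ∩ Y) + T) + #((X ∪ Y) + T) ≤ #(X + T) + #(Y + T) := by
  calc #((X ∩ Y) + T) + #((X ∪ Y) + T)
      ≤ #((X + T) ∩ (Y + T)) + #((X + T) ∪ (Y + T)) := by
        rw [union_add]; gcongr; exact inter_add_subset
    _ = #(X + T) + #(Y + T) := by rw [add_comm, card_union_add_card_inter]

lemma ZMod.eq_univ_of_vadd_finset_eq {p : ℕ} [NeZero p] (hp : p.Prime) {c : ZMod p} (hc : c ≠ 0)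
    {A : Finset (ZMod p)} (hA : A.Nonempty) (h : c +ᵥ A = A) : A = univ := by
  have : Fact (Nat.card (ZMod p)).Prime := ⟨by rwa [Nat.card_zmod]⟩
  have hstab : AddAction.stabilizer (ZMod p) A = ⊤ :=
    (AddSubgroup.eq_bot_or_eq_top_of_prime_card _).resolve_left fun hbot =>
      hc (AddSubgroup.mem_bot.mp (hbot ▸ h))
  obtain ⟨a, ha⟩ := hA
  refine eq_univ_of_forall fun x => ?_
  have hx : (x - a) +ᵥ A = A := (hstab ▸ AddSubgroup.mem_top (x - a) :)
  rw [← hx]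
  exact mem_vadd_finset.mpr ⟨a, ha, sub_add_cancel x a⟩

section Isoperimetry

variable {p : ℕ} {j : ℕ} {T X F A B : Finset (ZMod p)}

lemma bddBelow_kappa_set [NeZero p] (j : ℕ) (T : Finset (ZMod p)) :
    BddBelow {n : ℤ | ∃ X : Finset (ZMod p),
      j ≤ #X ∧ #(X + T) ≤ p - j ∧ n = (#(X + T) : ℤ) - #X} := by
  refine ⟨-p, ?_⟩
  rintro _ ⟨X, -, -, rfl⟩
  have : #X ≤ p := (card_le_univ X).trans_eq (ZMod.card p)
  omega

lemma kappa_le_card_add_sub_card [NeZero p] (hj : j ≤ #X) (hX : #(X + T) ≤ p - j) :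
    kappa p j T ≤ #(X + T) - #X :=
  csInf_le (bddBelow_kappa_set j T) ⟨X, hj, hX, rfl⟩

lemma Separable.exists_isKAtom [NeZero p] (h : Separable p j T) : ∃ A, IsKAtom p j T A := by
  obtain ⟨X₀, hX₀⟩ := h
  obtain ⟨X, hj, hX, hκ⟩ :=
    Int.csInf_mem (s := {n : ℤ | ∃ X : Finset (ZMod p),
      j ≤ #X ∧ #(X + T) ≤ p - j ∧ n = #(X + T) - #X}) ⟨_, X₀, hX₀.1, hX₀.2, rfl⟩
      (bddBelow_kappa_set j T)
  have hcard : {n : ℕ | ∃ Y, IsFragment p j T Y ∧ #Y = n}.Nonempty :=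
    ⟨_, X, ⟨hj, hX, hκ.symm⟩, rfl⟩
  obtain ⟨A, hA, hAcard⟩ := Nat.sInf_mem hcard
  exact ⟨A, hA, fun Y hY => hAcard ▸ Nat.sInf_le ⟨Y, hY, rfl⟩⟩

lemma IsFragment.vadd (c : ZMod p) (hX : IsFragment p j T X) : IsFragment p j T (c +ᵥ X) := by
  simpa only [IsFragment, vadd_add_assoc, card_vadd_finset] using hX

lemma IsFragment.neg_compl [NeZero p] (hX : IsFragment p j T X) :
    IsFragment p j T (-(X + T)ᶜ) ∧ #(-(X + T)ᶜ) = p - #(X + T) := by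
  obtain ⟨hj, hXT, hκ⟩ := hX
  have hcard : #(-(X + T)ᶜ) = p - #(X + T) := by rw [card_neg, card_compl, ZMod.card]
  have hdisj : Disjoint (-(X + T)ᶜ + T) (-X) := by
    simp only [disjoint_left, mem_add, mem_neg, mem_compl]
    rintro _ ⟨_, ⟨y, hy, rfl⟩, t, ht, rfl⟩ ⟨x, hx, hxy⟩
    exact hy ⟨x, hx, t, ht, by linear_combination -hxy⟩
  have hYT : #(-(X + T)ᶜ + T) + #X ≤ p := by
    rw [← card_neg X, ← card_union_of_disjoint hdisj]
    exact (card_le_univ _).trans_eq (ZMod.card p)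
  have hXp : #X ≤ p := (card_le_univ X).trans_eq (ZMod.card p)
  have hj' : j ≤ #(-(X + T)ᶜ) := by omega
  have hYT' : #(-(X + T)ᶜ + T) ≤ p - j := by omega
  refine ⟨⟨hj', hYT', le_antisymm ?_ (kappa_le_card_add_sub_card hj' hYT')⟩, hcard⟩
  omega

lemma IsKAtom.card_add_card_add_kappa_le [NeZero p] (hA : IsKAtom p j T A)
    (hF : IsFragment p j T F) : (#A : ℤ) + #F + kappa p j T ≤ p := by
  obtain ⟨hdual, hcard⟩ := hF.neg_compl
  have hmin := hA.2 _ hdual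
  have hFT : #(F + T) ≤ p := (card_le_univ _).trans_eq (ZMod.card p)
  have hκ := hF.2.2
  omega

lemma IsKAtom.card_inter_lt [NeZero p] (hA : IsKAtom p j T A) (hF : IsFragment p j T F)
    (hAF : ¬A ⊆ F) : #(A ∩ F) < j := by
  by_contra! hI
  obtain ⟨hAj, hAT, hκA⟩ := hA.1
  have hκF := hF.2.2
  have hsubmod := card_inter_add_add_card_union_add_le A F T
  have hcards := card_inter_add_card_union A F
  have hIT : #((A ∩ F) + T) ≤ p - j :=
    (card_le_card (add_subset_add_right inter_subset_left)).trans hAT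
  have hκI := kappa_le_card_add_sub_card hI hIT
  by_cases hUT : #((A ∪ F) + T) ≤ p - j
  · have hκU := kappa_le_card_add_sub_card (hAj.trans (card_le_card subset_union_left)) hUT
    have hIfrag : IsFragment p j T (A ∩ F) := ⟨hI, hIT, by omega⟩
    exact hAF (inter_eq_left.mp (eq_of_subset_of_card_le inter_subset_left (hA.2 _ hIfrag)))
  · have := hA.card_add_card_add_kappa_le hF
    omega

lemma IsKAtom.card_vadd_inter_vadd_lt [NeZero p] (hp : p.Prime) (hj : 0 < j) (hT : T.Nonempty)
    (hA : IsKAtom p j T A) {c₁ c₂ : ZMod p} (hc : c₁ ≠ c₂) :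
    #((c₁ +ᵥ A) ∩ (c₂ +ᵥ A)) < j := by
  rw [← add_sub_cancel c₁ c₂, ← vadd_vadd, ← vadd_finset_inter, card_vadd_finset]
  refine hA.card_inter_lt (hA.1.vadd _) fun hsub => ?_
  have hfix : (c₂ - c₁) +ᵥ A = A := (eq_of_subset_of_card_le hsub (card_vadd_finset _ A).le).symm
  obtain ⟨hAj, hAT, -⟩ := hA.1
  have hAp : #A < p := by
    have := card_le_card_add_right (s := A) hT
    omega
  have hAne : A.Nonempty := card_pos.mp (hj.trans_le hAj)
  rw [ZMod.eq_univ_of_vadd_finset_eq hp (sub_ne_zero.mpr hc.symm) hAne hfix, card_univ,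
    ZMod.card] at hAp
  exact hAp.false

lemma IsKAtom.card_mul_le_card_add [NeZero p] (hp : p.Prime) (hj : 0 < j) (hT : T.Nonempty)
    (hA : IsKAtom p j T A) (D : Finset (ZMod p)) :
    2 * (#D * #A : ℤ) ≤ 2 * #(D + A) + (j - 1) * #D * (#D - 1) := by
  induction D using Finset.induction_on with
  | empty => simp
  | insert c D hc ih =>
    have hcover : (c +ᵥ A) ∩ (D + A) ⊆ D.biUnion fun d => (c +ᵥ A) ∩ (d +ᵥ A) := by
      simp only [subset_iff, mem_inter, mem_add, mem_biUnion, mem_vadd_finset, vadd_eq_add]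
      rintro _ ⟨hx, d, hd, a, ha, rfl⟩
      exact ⟨d, hd, hx, a, ha, rfl⟩
    have hinter : #((c +ᵥ A) ∩ (D + A)) ≤ (j - 1) * #D := by
      calc #((c +ᵥ A) ∩ (D + A))
          ≤ ∑ d ∈ D, #((c +ᵥ A) ∩ (d +ᵥ A)) := (card_le_card hcover).trans card_biUnion_le
        _ ≤ ∑ _d ∈ D, (j - 1) := sum_le_sum fun d hd => Nat.le_sub_one_of_lt <|
            hA.card_vadd_inter_vadd_lt hp hj hT (ne_of_mem_of_not_mem hd hc).symm
        _ = (j - 1) * #D := by rw [sum_const, smul_eq_mul, mul_comm]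
    have hunion := card_union_add_card_inter (c +ᵥ A) (D + A)
    rw [card_vadd_finset] at hunion
    rw [card_insert_of_notMem hc, insert_eq, union_add, singleton_add]
    zify [show 1 ≤ j from hj] at hunion hinter
    push_cast
    linarith

lemma IsKAtom.two_mul_card_lt_card_add_add [NeZero p] (hp : p.Prime) (hj : 0 < j)
    (hT : T.Nonempty) (hA : IsKAtom p j T A) {D : Finset (ZMod p)} (hD : 1 < #D) :
    2 * #A < #(D + A) + j := by
  obtain ⟨d₁, hd₁, d₂, hd₂, hd⟩ := one_lt_card.mp hD
  have hpair := hA.card_mul_le_card_add hp hj hT {d₁, d₂}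
  have hsub : #({d₁, d₂} + A) ≤ #(D + A) :=
    card_le_card (add_subset_add_right (insert_subset hd₁ (singleton_subset_iff.mpr hd₂)))
  rw [card_pair hd] at hpair
  omega

lemma IsKAtom.card_le_kappa_sub_card_add_three [NeZero p] (hp : p.Prime) (hA : 2 ≤ #A)
    (hB : IsKAtom p 2 A B) : (#B : ℤ) ≤ kappa p 2 A - #A + 3 := by
  obtain ⟨hB2, hBA, hκA⟩ := hB.1
  have hAne : A.Nonempty := card_pos.mp (by omega)
  have hBne : B.Nonempty := card_pos.mp (by omega)
  have hCD : #B + #A ≤ #(B + A) + 1 := by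
    have := ZMod.cauchy_davenport hp hBne hAne
    have := card_le_card_add_right (s := B) hAne
    omega
  have hAB : #(A + B) ≤ p - 2 := by rwa [add_comm]
  obtain ⟨C, hC⟩ := Separable.exists_isKAtom ⟨A, hA, hAB⟩
  obtain ⟨hC2, -, hκC⟩ := hC.1
  have hκB := kappa_le_card_add_sub_card hA hAB
  have hBC := hB.two_mul_card_lt_card_add_add hp two_pos hAne (D := C) (by omega)
  have hCB := hC.two_mul_card_lt_card_add_add hp two_pos hBne (D := B) (by omega)
  have hunion := hB.card_mul_le_card_add hp two_pos hAne C
  rw [add_comm A B] at hκB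
  rw [add_comm B C] at hCB
  push_cast at hunion
  set μ := kappa p 2 A - #A
  have hμ : -1 ≤ μ := by omega
  have hC_lo : (#B : ℤ) - μ - 1 ≤ #C := by omega
  have hC_hi : (#C : ℤ) ≤ #B + μ + 1 := by omega
  by_contra! h
  -- With `t = #B`, `u = #C`: `hunion` says `u (2t - u - 1) ≤ 2 (t + μ)`, but this concave function
  -- of `u` exceeds `2 (t + μ)` at both ends of `[t - μ - 1, t + μ + 1]` once `t ≥ μ + 4`.
  nlinarith [mul_nonneg (sub_nonneg.mpr hC_lo) (sub_nonneg.mpr hC_hi)]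

end Isoperimetry

theorem k_atom_card_le_general (p : ℕ) (hp : p.Prime) (k : ℕ) (hk : 3 ≤ k)
    (S : Finset (ZMod p)) (hS2 : 2 ≤ S.card)
    (m : ℤ) (hkappa : kappa p k S ≤ (S.card : ℤ) + m)
    (A : Finset (ZMod p)) (hA : IsKAtom p k S A) :
    (A.card : ℤ) ≤ 2 * m + k + 2 := by
  have : NeZero p := ⟨hp.ne_zero⟩
  obtain ⟨hAk, hAS, hκA⟩ := hA.1
  have hSA : #(S + A) ≤ p - 2 := by rw [add_comm]; omega
  obtain ⟨B, hB⟩ := Separable.exists_isKAtom ⟨S, hS2, hSA⟩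
  have hκ₂ := kappa_le_card_add_sub_card hS2 hSA
  have hBcard := hB.card_le_kappa_sub_card_add_three hp (by omega)
  have hBA := hA.two_mul_card_lt_card_add_add hp (by omega) (card_pos.mp (by omega)) hB.1.1
  have hκB := hB.1.2.2
  rw [add_comm S A] at hκ₂
  omega

theorem k_atom_card_le (p : ℕ) (hp : p.Prime) (k : ℕ) (hk : 3 ≤ k)
    (S : Finset (ZMod p)) (h0 : (0 : ZMod p) ∈ S) (hS2 : 2 ≤ S.card)
    (hsep : Separable p k S) (m : ℤ) (hkappa : kappa p k S ≤ (S.card : ℤ) + m)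
    (A : Finset (ZMod p)) (hA : IsKAtom p k S A) :
    (A.card : ℤ) ≤ 2 * m + k + 2 :=
  k_atom_card_le_general p hp k hk S hS2 m hkappa A hA
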